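/- arXiv:1512.05587 — 3 statements merged into one kernel-verified Lean document; each statement's English description precedes it below -/
import Mathlib

section
/- Let (A_i)_{i∈I} be an inverse system of finite abelian groups over a directed poset I. Then lim← A_i = 0 if and only if for every i ∈ I there exists j ≥ i such that the transition map φ_{ji}: A_j → A_i is the zero map. -/
/-!
An inverse system of finite sets satisfies the Mittag-Leffler condition: the images of the
transition maps into a fixed `A i` decrease and hence stabilize, and by Kőnig's lemma every element
of this stable image lifts to a compatible family. So if the inverse limit vanishes, the stable
image is zero, and it is the image of some transition map `A j → A i`.
-/

open CategoryTheory

namespace CategoryTheory.Functor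

variable {J : Type*} [Category J] [IsCofilteredOrEmpty J] (F : J ⥤ Type*)

theorem isMittagLeffler_of_finite [∀ j, Finite (F.obj j)] : F.IsMittagLeffler :=
  F.isMittagLeffler_of_exists_finite_range fun j => ⟨j, 𝟙 j, Set.toFinite _⟩

theorem eventualRange_subset_range_eval_sections [∀ j, Finite (F.obj j)]
    [∀ j, Nonempty (F.obj j)] (j : J) :
    F.eventualRange j ⊆ Set.range fun s : F.sections => s.val j := by
  intro x hx
  have hML := F.isMittagLeffler_of_finite
  have := F.toEventualRanges_nonempty hML
  obtain ⟨s, hs⟩ := F.toEventualRanges.eval_section_surjective_of_surjective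
    (F.surjective_toEventualRanges hML) j ⟨x, hx⟩
  exact ⟨F.toEventualRangesSectionsEquiv s, congrArg Subtype.val hs⟩

end CategoryTheory.Functor

namespace InverseSystem

variable {I : Type*} [Preorder I] {A : I → Type*} (f : ∀ ⦃i j : I⦄, i ≤ j → A j → A i)

def compatibleFamilies : Set (∀ i, A i) :=
  {g | ∀ ⦃i j⦄ (h : i ≤ j), f h (g j) = g i}

variable [InverseSystem f]

def toFunctor : Iᵒᵖ ⥤ Type _ where
  obj i := A i.unop
  map h := TypeCat.ofHom (f (leOfHom h.unop))
  map_id _ := by ext x; exact map_self x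
  map_comp _ _ := by ext x; exact (map_map _ _ x).symm

theorem exists_range_subset_image_eval_compatibleFamilies [IsDirectedOrder I]
    [∀ i, Finite (A i)] [∀ i, Nonempty (A i)] (i : I) :
    ∃ j, ∃ h : i ≤ j, Set.range (f h) ⊆ (fun g => g i) '' compatibleFamilies f := by
  have (k : Iᵒᵖ) : Finite ((toFunctor f).obj k) := ‹∀ i, Finite (A i)› k.unop
  have (k : Iᵒᵖ) : Nonempty ((toFunctor f).obj k) := ‹∀ i, Nonempty (A i)› k.unop
  obtain ⟨j, e, hstable⟩ := (toFunctor f).isMittagLeffler_iff_eventualRange.1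
    (toFunctor f).isMittagLeffler_of_finite (.op i)
  refine ⟨j.unop, leOfHom e.unop, ?_⟩
  rintro _ ⟨x, rfl⟩
  obtain ⟨s, hs⟩ := (toFunctor f).eventualRange_subset_range_eval_sections (.op i)
    (hstable.superset (Set.mem_range_self x))
  exact ⟨fun k => s.val (.op k), fun k l hkl => s.prop (homOfLE hkl).op, hs⟩

end InverseSystem

/-- An inverse limit of finite abelian groups over a directed poset is zero iff
for every index `i` there is some `j ≥ i` with zero transition map `A j → A i`. -/
theorem inverseLimit_eq_zero_iff
    {I : Type*} [PartialOrder I] [IsDirected I (· ≤ ·)]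
    (A : I → Type*) [∀ i, AddCommGroup (A i)] [∀ i, Finite (A i)]
    (φ : ∀ ⦃i j : I⦄, i ≤ j → A j →+ A i)
    (hid : ∀ i (x : A i), φ (le_refl i) x = x)
    (hcomp : ∀ ⦃i j k : I⦄ (hij : i ≤ j) (hjk : j ≤ k) (x : A k),
      φ hij (φ hjk x) = φ (hij.trans hjk) x) :
    (∀ g : ∀ i, A i, (∀ ⦃i j : I⦄ (h : i ≤ j), φ h (g j) = g i) → g = 0) ↔
      (∀ i : I, ∃ j : I, ∃ h : i ≤ j, ∀ x : A j, φ h x = 0) := by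
  have : InverseSystem fun _ _ h => ⇑(φ h) := ⟨fun i => hid i, hcomp⟩
  constructor
  · intro hlim i
    obtain ⟨j, hij, hlift⟩ :=
      InverseSystem.exists_range_subset_image_eval_compatibleFamilies (fun _ _ h => ⇑(φ h)) i
    refine ⟨j, hij, fun x => ?_⟩
    obtain ⟨g, hg, hgi⟩ := hlift (Set.mem_range_self x)
    rw [← hgi, hlim g hg]
    rfl
  · intro hzero g hg
    funext i
    obtain ⟨j, hij, hj⟩ := hzero i
    rw [← hg hij, hj, Pi.zero_apply]
end

section
/- Let Γ be a profinite group fitting in a short exact sequence 1 → Ẑ² → Γ → Ẑ → 1 of profinite groups, where Ẑ² is central in Γ. Then for all n ≥ 1, H¹(Γ; ℤ/n) ≅ (ℤ/n)³, where ℤ/n carries the trivial Γ-action. -/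
/-!
Choose `γ` with `g γ = 1`. Since `ℤ` is dense in `Ẑ`, a closed subgroup of `Γ` containing `ker g`
and `γ` is all of `Γ`; applied to the centralizer of `γ` and then to the centre, this shows that
`Γ` is abelian. Every element of `Γ` is then `f (a, b) * γ ^ c` up to an `n`-th power, with
`a b c : ℤ`, and `f (a, b) * γ ^ c` is an `n`-th power exactly when `n` divides `a`, `b` and `c`,
because `Ẑ / nẐ = ℤ / n` and `Ẑ` is torsion-free. Hence `Γ / Γⁿ ≅ (ℤ/n)³`. As `Γⁿ` is closed of
finite index it is open, so continuous homomorphisms `Γ → ℤ/n` are the homomorphisms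
`(ℤ/n)³ → ℤ/n`.
-/

/-- The ring of profinite integers `Ẑ`, as the subring of compatible families in
`∏ₙ ℤ/n`. -/
def ZHat : Subring (∀ n : ℕ+, ZMod n) where
  carrier := {x | ∀ (m n : ℕ+) (h : (m : ℕ) ∣ (n : ℕ)), ZMod.castHom h (ZMod m) (x n) = x m}
  zero_mem' := by intro m n h; exact map_zero (ZMod.castHom h (ZMod (m : ℕ)))
  one_mem' := by intro m n h; exact map_one (ZMod.castHom h (ZMod (m : ℕ)))
  add_mem' := by
    intro a b ha hb m n h
    simp only [Pi.add_apply, map_add, ha m n h, hb m n h]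
  mul_mem' := by
    intro a b ha hb m n h
    simp only [Pi.mul_apply, map_mul, ha m n h, hb m n h]
  neg_mem' := by
    intro a ha m n h
    simp only [Pi.neg_apply, map_neg, ha m n h]

/-- Reduction `Ẑ → ℤ/n`. -/
def ZHat.proj (n : ℕ+) : ZHat →+* ZMod n := (Pi.evalRingHom _ n).comp ZHat.subtype

instance (n : ℕ+) : TopologicalSpace (ZMod n) := ⊥
instance (n : ℕ+) : DiscreteTopology (ZMod n) := ⟨rfl⟩
instance : TopologicalSpace ZHat := instTopologicalSpaceSubtype

instance (n : ℕ) : TopologicalSpace (Multiplicative (ZMod n)) := ⊥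
instance (n : ℕ) : DiscreteTopology (Multiplicative (ZMod n)) := ⟨rfl⟩
instance (n : ℕ) : IsTopologicalGroup (Multiplicative (ZMod n)) where
  continuous_mul := continuous_of_discreteTopology
  continuous_inv := continuous_of_discreteTopology

namespace ZHat

lemma ext_proj {x y : ZHat} (h : ∀ m, proj m x = proj m y) : x = y :=
  Subtype.ext (funext h)

lemma natCast_val_proj {m k : ℕ+} (h : (m : ℕ) ∣ k) (x : ZHat) :
    ((proj k x).val : ZMod m) = proj m x := by
  rw [← ZMod.cast_eq_val]
  exact x.2 m k h

lemma proj_natCast_mul_self (n : ℕ+) (x : ZHat) : proj n (n * x) = 0 := by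
  rw [map_mul, map_natCast, ZMod.natCast_self, zero_mul]

theorem exists_eq_mul_of_proj_eq_zero {n : ℕ+} {x : ZHat} (hx : proj n x = 0) :
    ∃ y : ZHat, x = n * y := by
  have hdvd : ∀ m : ℕ+, (n : ℕ) ∣ (proj (n * m) x).val := fun m => by
    rw [← ZMod.natCast_eq_zero_iff, natCast_val_proj (by simp) x, hx]
  -- the `m`-th coordinate of `x / n` is read off the `n * m`-th coordinate of `x`
  refine ⟨⟨fun m => (((proj (n * m) x).val / n : ℕ) : ZMod m), fun m k hmk => ?_⟩, ?_⟩
  · have hmod : (proj (n * k) x).val ≡ (proj (n * m) x).val [MOD n * m] := by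
      rw [← ZMod.natCast_eq_natCast_iff, ← PNat.mul_coe, ZMod.natCast_zmod_val,
        natCast_val_proj (by simpa using mul_dvd_mul_left (n : ℕ) hmk)]
    rw [← Nat.mul_div_cancel' (hdvd k), ← Nat.mul_div_cancel' (hdvd m)] at hmod
    rw [map_natCast, ZMod.natCast_eq_natCast_iff]
    exact Nat.ModEq.mul_left_cancel' n.ne_zero hmod
  · refine ext_proj fun m => ?_
    change proj m x = n * (((proj (n * m) x).val / n : ℕ) : ZMod m)
    rw [← Nat.cast_mul, Nat.mul_div_cancel' (hdvd m), natCast_val_proj (by simp)]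

theorem exists_natCast_add_mul (n : ℕ+) (x : ZHat) : ∃ (c : ℕ) (y : ZHat), x = c + n * y := by
  obtain ⟨y, hy⟩ := exists_eq_mul_of_proj_eq_zero (n := n) (x := x - (proj n x).val)
    (by rw [map_sub, map_natCast, ZMod.natCast_zmod_val, sub_self])
  exact ⟨_, y, by rw [← hy, add_sub_cancel]⟩

theorem eq_zero_of_natCast_mul_eq_zero {n : ℕ+} {x : ZHat} (hx : (n : ZHat) * x = 0) :
    x = 0 := by
  refine ext_proj fun m => ?_
  have h : ((n * (proj (n * m) x).val : ℕ) : ZMod (n * m : ℕ+)) = 0 := by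
    rw [Nat.cast_mul, ZMod.natCast_zmod_val, ← map_natCast (proj (n * m)), ← map_mul, hx,
      map_zero]
  have hm : (m : ℕ) ∣ (proj (n * m) x).val := Nat.dvd_of_mul_dvd_mul_left n.pos
    (by simpa using (ZMod.natCast_eq_zero_iff _ _).1 h)
  rw [← natCast_val_proj (by simp : (m : ℕ) ∣ (n * m : ℕ+)),
    (ZMod.natCast_eq_zero_iff _ _).2 hm, map_zero]

theorem intCast_dvd_of_eq_mul {n : ℕ+} {c : ℤ} {t : ZHat} (h : (c : ZHat) = n * t) :
    (n : ℤ) ∣ c := by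
  rw [← ZMod.intCast_zmod_eq_zero_iff_dvd, ← map_intCast (proj n), h, proj_natCast_mul_self]

theorem denseRange_natCast : DenseRange (Nat.cast : ℕ → ZHat) := by
  intro x
  rw [mem_closure_iff]
  intro o ho hxo
  obtain ⟨V, hV, rfl⟩ := isOpen_induced_iff.1 ho
  obtain ⟨I, u, hu, hsub⟩ := isOpen_pi_iff.1 hV _ hxo
  have hdvd : ∀ i ∈ I, (i : ℕ) ∣ (∏ j ∈ I, j : ℕ+) := fun i hi =>
    PNat.dvd_iff.1 (Finset.dvd_prod_of_mem _ hi)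
  refine ⟨((proj (∏ j ∈ I, j) x).val : ZHat), hsub fun i hi => ?_, _, rfl⟩
  change proj i ((proj (∏ j ∈ I, j) x).val : ZHat) ∈ u i
  rw [map_natCast, natCast_val_proj (hdvd i hi)]
  exact (hu i hi).2

theorem subgroup_eq_top_of_isClosed {S : Subgroup (Multiplicative ZHat)}
    (hS : IsClosed (S : Set (Multiplicative ZHat))) (h1 : Multiplicative.ofAdd 1 ∈ S) :
    S = ⊤ := by
  have hrange : Set.range (fun m : ℕ => Multiplicative.ofAdd (m : ZHat)) ⊆ S := by
    rintro _ ⟨m, rfl⟩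
    simpa [← ofAdd_nsmul] using pow_mem h1 m
  have hdense : DenseRange (fun m : ℕ => Multiplicative.ofAdd (m : ZHat)) :=
    Multiplicative.ofAdd.surjective.denseRange.comp denseRange_natCast continuous_ofAdd
  rw [← SetLike.coe_set_eq, Subgroup.coe_top, ← hdense.closure_range]
  exact (hdense.closure_range ▸ Set.subset_univ _).antisymm (hS.closure_subset_iff.2 hrange)

end ZHat

section CentralExtension

variable {Γ : Type*} [Group Γ] [TopologicalSpace Γ] [CompactSpace Γ]
  {g : Γ →* Multiplicative ZHat}

theorem eq_top_of_isClosed_of_ker_le (hg : Continuous g) {γ : Γ}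
    (hγ : g γ = Multiplicative.ofAdd 1) {H : Subgroup Γ} (hH : IsClosed (H : Set Γ))
    (hker : g.ker ≤ H) (hγH : γ ∈ H) : H = ⊤ := by
  have hmap : H.map g = ⊤ := by
    refine ZHat.subgroup_eq_top_of_isClosed ?_ ⟨γ, hγH, hγ⟩
    rw [Subgroup.coe_map]
    exact (hH.isCompact.image hg).isClosed
  rw [← sup_eq_left.2 hker, ← Subgroup.comap_map_eq, hmap, Subgroup.comap_top]

theorem mul_comm_of_ker_le_center [IsTopologicalGroup Γ] [T2Space Γ] (hg : Continuous g)
    (hsurj : Function.Surjective g) (hker : g.ker ≤ Subgroup.center Γ) (a b : Γ) :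
    a * b = b * a := by
  obtain ⟨γ, hγ⟩ := hsurj (Multiplicative.ofAdd 1)
  have hγ_comm : Subgroup.centralizer {γ} = ⊤ :=
    eq_top_of_isClosed_of_ker_le hg hγ (Set.isClosed_centralizer _)
      (hker.trans (Subgroup.center_le_centralizer _))
      (Subgroup.mem_centralizer_singleton_iff.2 rfl)
  have hcenter : Subgroup.center Γ = ⊤ := by
    refine eq_top_of_isClosed_of_ker_le hg hγ ?_ hker (Subgroup.mem_center_iff.2 fun y => ?_)
    · rw [← Subgroup.centralizer_univ]
      exact Set.isClosed_centralizer _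
    · exact Subgroup.mem_centralizer_singleton_iff.1 (hγ_comm ▸ Subgroup.mem_top y)
  exact Subgroup.mem_center_iff.1 (hcenter ▸ Subgroup.mem_top b) a

end CentralExtension

section PowerQuotient

open Multiplicative

variable {G : Type*} [CommGroup G] (f : Multiplicative (ZHat × ZHat) →* G) (γ : G)

def intTripleHom : Multiplicative (ℤ × ℤ × ℤ) →* G where
  toFun v := f (ofAdd (((toAdd v).1 : ZHat), ((toAdd v).2.1 : ZHat))) * γ ^ (toAdd v).2.2
  map_one' := by simp [← Prod.zero_eq_mk]
  map_mul' v w := by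
    simp only [toAdd_mul, Prod.fst_add, Prod.snd_add, Int.cast_add, zpow_add]
    rw [mul_mul_mul_comm, ← map_mul, ← ofAdd_add]
    rfl

def intTripleReduce (n : ℕ) :
    Multiplicative (ℤ × ℤ × ℤ) →* Multiplicative (ZMod n × ZMod n × ZMod n) :=
  AddMonoidHom.toMultiplicative
    ((Int.castAddHom _).prodMap ((Int.castAddHom _).prodMap (Int.castAddHom _)))

lemma intTripleReduce_surjective (n : ℕ) : Function.Surjective (intTripleReduce n) := by
  intro u
  obtain ⟨a, ha⟩ := ZMod.intCast_surjective (toAdd u).1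
  obtain ⟨b, hb⟩ := ZMod.intCast_surjective (toAdd u).2.1
  obtain ⟨c, hc⟩ := ZMod.intCast_surjective (toAdd u).2.2
  exact ⟨ofAdd (a, b, c), by simp [intTripleReduce, ha, hb, hc]⟩

lemma intTripleReduce_eq_one_iff {n : ℕ} {a b c : ℤ} :
    intTripleReduce n (ofAdd (a, b, c)) = 1 ↔ (n : ℤ) ∣ a ∧ (n : ℤ) ∣ b ∧ (n : ℤ) ∣ c := by
  simp [intTripleReduce, ← ofAdd_zero, Prod.ext_iff, ZMod.intCast_zmod_eq_zero_iff_dvd]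

variable {f γ} {g : G →* Multiplicative ZHat} (hexact : f.range = g.ker)
  (hγ : g γ = ofAdd 1)
include hexact hγ

theorem exists_eq_intTripleHom_mul_pow (hsurj : Function.Surjective g) (n : ℕ+) (x : G) :
    ∃ v z, x = intTripleHom f γ v * z ^ (n : ℕ) := by
  obtain ⟨c, s, hcs⟩ := ZHat.exists_natCast_add_mul n (toAdd (g x))
  obtain ⟨w, hw⟩ := hsurj (ofAdd s)
  obtain ⟨p, hp⟩ : x * γ ^ (-(c : ℤ)) * (w ^ (n : ℕ))⁻¹ ∈ f.range := by
    rw [hexact, MonoidHom.mem_ker]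
    apply toAdd.injective
    simp [hγ, hw, hcs]
  obtain ⟨a, p', hap⟩ := ZHat.exists_natCast_add_mul n (toAdd p).1
  obtain ⟨b, q', hbq⟩ := ZHat.exists_natCast_add_mul n (toAdd p).2
  have hp' : p = ofAdd ((a : ZHat), (b : ZHat)) * ofAdd (p', q') ^ (n : ℕ) := by
    apply toAdd.injective
    simp [Prod.ext_iff, hap, hbq]
  refine ⟨ofAdd (a, b, c), f (ofAdd (p', q')) * w, ?_⟩
  rw [hp', map_mul, map_pow] at hp
  have hx : x = f (ofAdd ((a : ZHat), (b : ZHat))) * f (ofAdd (p', q')) ^ (n : ℕ) * w ^ (n : ℕ)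
      * γ ^ (c : ℤ) := by
    rw [hp]; group
  rw [hx]
  simp only [intTripleHom, MonoidHom.coe_mk, OneHom.coe_mk, toAdd_ofAdd, Int.cast_natCast,
    mul_pow, zpow_natCast]
  simp only [mul_comm, mul_left_comm, mul_assoc]

theorem intTripleHom_mem_powRange_iff (hinj : Function.Injective f) (n : ℕ+)
    (v : Multiplicative (ℤ × ℤ × ℤ)) :
    intTripleHom f γ v ∈ (powMonoidHom (n : ℕ) : G →* G).range ↔ intTripleReduce n v = 1 := by
  obtain ⟨⟨a, b, c⟩, rfl⟩ := ofAdd.surjective v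
  have hgf : ∀ p, g (f p) = 1 := fun p => MonoidHom.mem_ker.1 (hexact ▸ ⟨p, rfl⟩)
  rw [intTripleReduce_eq_one_iff]
  constructor
  · rintro ⟨y, hy⟩
    change y ^ (n : ℕ) = f (ofAdd ((a : ZHat), (b : ZHat))) * γ ^ c at hy
    have hc : ((c : ℤ) : ZHat) = n * toAdd (g y) := by
      simpa [hgf, hγ] using (congrArg (fun z => toAdd (g z)) hy).symm
    obtain ⟨c', rfl⟩ := ZHat.intCast_dvd_of_eq_mul hc
    have hc' : toAdd (g y) = c' := by
      refine (sub_eq_zero.1 (ZHat.eq_zero_of_natCast_mul_eq_zero (n := n) ?_))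
      rw [mul_sub, ← hc]; push_cast; ring
    obtain ⟨u, hu⟩ : y * γ ^ (-c') ∈ f.range := by
      rw [hexact, MonoidHom.mem_ker]
      apply toAdd.injective
      simp [hγ, hc']
    have hab : ofAdd ((a : ZHat), (b : ZHat)) = u ^ (n : ℕ) := by
      apply hinj
      rw [map_pow, hu, mul_pow, hy]
      group
    have hab' := congrArg toAdd hab
    simp only [toAdd_ofAdd, toAdd_pow, nsmul_eq_mul, Prod.ext_iff, Prod.fst_mul,
      Prod.fst_natCast, Prod.snd_mul, Prod.snd_natCast] at hab'
    exact ⟨ZHat.intCast_dvd_of_eq_mul hab'.1, ZHat.intCast_dvd_of_eq_mul hab'.2, dvd_mul_right _ _⟩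
  · rintro ⟨⟨a', rfl⟩, ⟨b', rfl⟩, ⟨c', rfl⟩⟩
    refine ⟨intTripleHom f γ (ofAdd (a', b', c')), ?_⟩
    rw [powMonoidHom_apply, ← map_pow]
    congr 1

noncomputable def quotientPowEquiv (hsurj : Function.Surjective g) (hinj : Function.Injective f)
    (n : ℕ+) :
    G ⧸ (powMonoidHom (n : ℕ) : G →* G).range ≃* Multiplicative (ZMod n × ZMod n × ZMod n) :=
  let π := (QuotientGroup.mk' _).comp (intTripleHom f γ)
  have hπ : Function.Surjective π := by
    intro q
    obtain ⟨x, rfl⟩ := QuotientGroup.mk_surjective q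
    obtain ⟨v, z, rfl⟩ := exists_eq_intTripleHom_mul_pow hexact hγ hsurj n x
    have hz : ((z ^ (n : ℕ) : G) : G ⧸ (powMonoidHom (n : ℕ)).range) = 1 :=
      (QuotientGroup.eq_one_iff _).2 ⟨z, rfl⟩
    refine ⟨v, ?_⟩
    rw [QuotientGroup.mk_mul, hz, mul_one]
    rfl
  have hker : (intTripleReduce n).ker = π.ker := by
    ext v
    rw [MonoidHom.mem_ker, MonoidHom.mem_ker, MonoidHom.comp_apply, QuotientGroup.mk'_apply,
      QuotientGroup.eq_one_iff, intTripleHom_mem_powRange_iff hexact hγ hinj]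
  (QuotientGroup.liftEquiv _ hπ hker).symm.trans
    (QuotientGroup.quotientKerEquivOfSurjective _ (intTripleReduce_surjective n))

end PowerQuotient

section ContinuousHom

variable {G M : Type*} [CommGroup G] [TopologicalSpace G] [IsTopologicalGroup G]
  [CommGroup M] [TopologicalSpace M] [IsTopologicalGroup M]

lemma isOpen_powMonoidHom_range [CompactSpace G] [T2Space G] (n : ℕ)
    [(powMonoidHom n : G →* G).range.FiniteIndex] :
    IsOpen ((powMonoidHom n : G →* G).range : Set G) := by
  apply Subgroup.isOpen_of_isClosed_of_finiteIndex
  rw [MonoidHom.coe_range]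
  exact (isCompact_range (continuous_pow n)).isClosed

noncomputable def continuousMonoidHomEquivQuotientPow [CompactSpace G] [T2Space G] {n : ℕ}
    (hM : ∀ m : M, m ^ n = 1) [(powMonoidHom n : G →* G).range.FiniteIndex] :
    ContinuousMonoidHom G M ≃* (G ⧸ (powMonoidHom n : G →* G).range →* M) where
  toFun φ := QuotientGroup.lift _ φ.toMonoidHom (by
    rintro _ ⟨x, rfl⟩
    exact (map_pow φ x n).trans (hM _))
  invFun ψ := ⟨ψ.comp (QuotientGroup.mk' _), by
    have := QuotientGroup.discreteTopology (isOpen_powMonoidHom_range (G := G) n)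
    exact (continuous_of_discreteTopology : Continuous ψ).comp QuotientGroup.continuous_mk⟩
  left_inv _ := rfl
  right_inv _ := QuotientGroup.monoidHom_ext _ rfl
  map_mul' _ _ := QuotientGroup.monoidHom_ext _ rfl

end ContinuousHom

noncomputable def monoidHomZModEquivOfFree (n : ℕ) (V : Type*) [AddCommGroup V]
    [Module (ZMod n) V] [Module.Free (ZMod n) V] [Module.Finite (ZMod n) V] :
    (Multiplicative V →* Multiplicative (ZMod n)) ≃* Multiplicative V :=
  (MonoidHom.toAdditiveRightMulEquiv : _ ≃* Multiplicative (V →+ ZMod n)).trans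
    ((AddMonoidHom.toZModLinearMapEquiv n).trans
      (Module.Free.chooseBasis (ZMod n) V).toDualEquiv.symm.toAddEquiv).toMultiplicative

theorem h1_of_central_extension_zhat_general
    (Γ : Type*) [Group Γ] [TopologicalSpace Γ] [IsTopologicalGroup Γ]
    [CompactSpace Γ] [T2Space Γ]
    (f : Multiplicative (ZHat × ZHat) →* Γ) (g : Γ →* Multiplicative ZHat)
    (hg_cont : Continuous g)
    (hf_inj : Function.Injective f) (hg_surj : Function.Surjective g)
    (hexact : f.range = g.ker)
    (hcentral : ∀ a, f a ∈ Subgroup.center Γ)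
    (n : ℕ) (hn : 1 ≤ n) :
    Nonempty (ContinuousMonoidHom Γ (Multiplicative (ZMod n)) ≃*
      Multiplicative (ZMod n × ZMod n × ZMod n)) := by
  have hker : g.ker ≤ Subgroup.center Γ := by
    rw [← hexact]
    rintro _ ⟨a, rfl⟩
    exact hcentral a
  let _ : CommGroup Γ := { mul_comm := mul_comm_of_ker_le_center hg_cont hg_surj hker }
  obtain ⟨γ, hγ⟩ := hg_surj (Multiplicative.ofAdd 1)
  lift n to ℕ+ using hn
  let e := quotientPowEquiv hexact hγ hg_surj hf_inj n
  have : Finite (Γ ⧸ (powMonoidHom (n : ℕ) : Γ →* Γ).range) := Finite.of_equiv _ e.symm.toEquiv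
  have := Subgroup.finiteIndex_of_finite_quotient (H := (powMonoidHom (n : ℕ) : Γ →* Γ).range)
  have hM : ∀ m : Multiplicative (ZMod n), m ^ (n : ℕ) = 1 := fun m => by
    apply Multiplicative.toAdd.injective
    simp
  exact ⟨(continuousMonoidHomEquivQuotientPow hM).trans
    ((MulEquiv.monoidHomCongrLeft e).trans (monoidHomZModEquivOfFree n _))⟩

/-- If a profinite group `Γ` is a central extension `1 → Ẑ² → Γ → Ẑ → 1`, then for
every `n ≥ 1` the first continuous cohomology `H¹(Γ; ℤ/n) = Hom_cont(Γ, ℤ/n)` with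
trivial coefficients is isomorphic to `(ℤ/n)³`. -/
theorem h1_of_central_extension_zhat
    (Γ : Type*) [Group Γ] [TopologicalSpace Γ] [IsTopologicalGroup Γ]
    [CompactSpace Γ] [T2Space Γ] [TotallyDisconnectedSpace Γ]
    (f : Multiplicative (ZHat × ZHat) →* Γ) (g : Γ →* Multiplicative ZHat)
    (hf_cont : Continuous f) (hg_cont : Continuous g)
    (hf_inj : Function.Injective f) (hg_surj : Function.Surjective g)
    (hexact : f.range = g.ker)
    (hcentral : ∀ a, f a ∈ Subgroup.center Γ)
    (n : ℕ) (hn : 1 ≤ n) :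
    Nonempty (ContinuousMonoidHom Γ (Multiplicative (ZMod n)) ≃*
      Multiplicative (ZMod n × ZMod n × ZMod n)) :=
  h1_of_central_extension_zhat_general Γ f g hg_cont hf_inj hg_surj hexact hcentral n hn
end

section
/- In the group B = ⟨a, b | a³, b³, (ab)³⟩, with x = a⁻¹b, y = ba⁻¹, u = y⁻¹x, v = x³, for all integers r, s the identity a·u^r·v^s = (y^{-r-s} x^s)⁻¹ · a · (y^{-r-s} x^s) holds; i.e., a u^r v^s is conjugate to a. -/
namespace Triangle333

/-- Relations of the (3,3,3) triangle group `⟨a, b ∣ a³, b³, (ab)³⟩`. -/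
def rels : Set (FreeGroup (Fin 2)) :=
  {(FreeGroup.of 0) ^ 3, (FreeGroup.of 1) ^ 3, (FreeGroup.of 0 * FreeGroup.of 1) ^ 3}

/-- The (3,3,3) Euclidean triangle group `B = ⟨a, b ∣ a³, b³, (ab)³⟩`. -/
abbrev B : Type := PresentedGroup rels

def a : B := PresentedGroup.of 0
def b : B := PresentedGroup.of 1
def x : B := a⁻¹ * b
def y : B := b * a⁻¹
def u : B := y⁻¹ * x
def v : B := x ^ 3

end Triangle333

/-!
The elements `x = a⁻¹b` and `y = ba⁻¹` commute, and conjugation by `a` sends `x ↦ y` and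
`y ↦ x⁻¹y⁻¹`. So `a` normalizes the abelian group of the `xᵐyⁿ`, acting on exponent vectors by
the rotation of order three `(m, n) ↦ (-n, m - n)`. Moving `a` to the right, both sides of the
identity become `xʳ y^{2r+3s} a`.
-/

namespace Triangle333

section CommutingPair

variable {G : Type*} [Group G] {a x y : G}

theorem zpow_mul_zpow_mul_zpow_mul_zpow (hc : Commute x y) (m n m' n' : ℤ) :
    x ^ m * y ^ n * (x ^ m' * y ^ n') = x ^ (m + m') * y ^ (n + n') := by
  rw [zpow_add, zpow_add, mul_assoc, ← mul_assoc (y ^ n), (hc.symm.zpow_zpow n m').eq]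
  simp only [mul_assoc]

theorem semiconjBy_zpow_mul_zpow (hc : Commute x y) (hx : SemiconjBy a x y)
    (hy : SemiconjBy a y (x⁻¹ * y⁻¹)) (m n : ℤ) :
    SemiconjBy a (x ^ m * y ^ n) (x ^ (-n) * y ^ (m - n)) := by
  have hxm : a * x ^ m = y ^ m * a := (hx.zpow_right m).eq
  have hyn : a * y ^ n = x ^ (-n) * y ^ (-n) * a := by
    rw [(hy.zpow_right n).eq, hc.inv_inv.mul_zpow, inv_zpow', inv_zpow']
  calc a * (x ^ m * y ^ n) = y ^ m * x ^ (-n) * y ^ (-n) * a := by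
        rw [← mul_assoc, hxm, mul_assoc, hyn]; simp only [mul_assoc]
    _ = x ^ (-n) * y ^ (m - n) * a := by
        rw [(hc.symm.zpow_zpow m (-n)).eq, mul_assoc (x ^ (-n)), ← zpow_add, sub_eq_add_neg]

theorem mul_inv_mul_zpow_mul_pow_three_zpow_conj (hc : Commute x y) (hx : SemiconjBy a x y)
    (hy : SemiconjBy a y (x⁻¹ * y⁻¹)) (r s : ℤ) :
    a * (y⁻¹ * x) ^ r * (x ^ 3) ^ s = (y ^ (-r - s) * x ^ s)⁻¹ * a * (y ^ (-r - s) * x ^ s) := by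
  have hu : (y⁻¹ * x) ^ r = x ^ r * y ^ (-r) := by
    rw [← hc.inv_right.eq, hc.inv_right.mul_zpow, inv_zpow']
  have hv : (x ^ 3) ^ s = x ^ (3 * s) * y ^ (0 : ℤ) := by
    rw [zpow_zero, mul_one, zpow_mul, zpow_ofNat]
  have hw : y ^ (-r - s) * x ^ s = x ^ s * y ^ (-r - s) := (hc.symm.zpow_zpow _ _).eq
  have hw_inv : (x ^ s * y ^ (-r - s))⁻¹ = x ^ (-s) * y ^ (-(-r - s)) := by
    rw [mul_inv_rev, ← zpow_neg, ← zpow_neg, (hc.symm.zpow_zpow _ _).eq]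
  have hlhs : a * (y⁻¹ * x) ^ r * (x ^ 3) ^ s = x ^ r * y ^ (2 * r + 3 * s) * a := by
    rw [hu, hv, mul_assoc, zpow_mul_zpow_mul_zpow_mul_zpow hc,
      (semiconjBy_zpow_mul_zpow hc hx hy _ _).eq]
    congr 3 <;> ring
  have hrhs : (y ^ (-r - s) * x ^ s)⁻¹ * a * (y ^ (-r - s) * x ^ s)
      = x ^ r * y ^ (2 * r + 3 * s) * a := by
    rw [hw, hw_inv, mul_assoc, (semiconjBy_zpow_mul_zpow hc hx hy _ _).eq, ← mul_assoc,
      zpow_mul_zpow_mul_zpow_mul_zpow hc]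
    congr 3 <;> ring
  rw [hlhs, hrhs]

end CommutingPair

section TriangleRelations

variable {G : Type*} [Group G] {a b : G}

/- In both proofs the bracketed factor is a product of conjugates of the relators, hence trivial. -/

theorem commute_inv_mul_mul_inv (ha : a ^ 3 = 1) (hb : b ^ 3 = 1) (hab : (a * b) ^ 3 = 1) :
    Commute (a⁻¹ * b) (b * a⁻¹) :=
  calc a⁻¹ * b * (b * a⁻¹)
      = (a⁻¹ * b ^ 3 * a * b * ((a * b) ^ 3)⁻¹ * a ^ 3 * b⁻¹) * (b * a⁻¹ * (a⁻¹ * b)) := by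
        simp only [pow_succ, pow_zero, one_mul]; group
    _ = b * a⁻¹ * (a⁻¹ * b) := by rw [ha, hb, hab]; group

theorem semiconjBy_mul_inv (ha : a ^ 3 = 1) (hab : (a * b) ^ 3 = 1) :
    SemiconjBy a (b * a⁻¹) ((a⁻¹ * b)⁻¹ * (b * a⁻¹)⁻¹) :=
  calc a * (b * a⁻¹)
      = (a * b * a * (a ^ 3)⁻¹ * (a * b * a)⁻¹ * (a * b * a * b * a) * (a ^ 3)⁻¹
          * (a * b * a * b * a)⁻¹ * (a * b) ^ 3) * ((a⁻¹ * b)⁻¹ * (b * a⁻¹)⁻¹ * a) := by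
        simp only [pow_succ, pow_zero, one_mul]; group
    _ = (a⁻¹ * b)⁻¹ * (b * a⁻¹)⁻¹ * a := by rw [ha, hab]; group

end TriangleRelations

theorem a_pow_three : a ^ 3 = 1 :=
  PresentedGroup.one_of_mem (x := FreeGroup.of 0 ^ 3) (by simp [rels])

theorem b_pow_three : b ^ 3 = 1 :=
  PresentedGroup.one_of_mem (x := FreeGroup.of 1 ^ 3) (by simp [rels])

theorem a_mul_b_pow_three : (a * b) ^ 3 = 1 :=
  PresentedGroup.one_of_mem (x := (FreeGroup.of 0 * FreeGroup.of 1) ^ 3) (by simp [rels])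

/-- In the (3,3,3) triangle group, `a·uʳ·vˢ = (y^{-r-s}xˢ)⁻¹ · a · (y^{-r-s}xˢ)`;
in particular `a·uʳ·vˢ` is conjugate to `a`. -/
theorem a_mul_u_zpow_mul_v_zpow_conj (r s : ℤ) :
    a * u ^ r * v ^ s = (y ^ (-r - s) * x ^ s)⁻¹ * a * (y ^ (-r - s) * x ^ s) := by
  have hc : Commute x y := commute_inv_mul_mul_inv a_pow_three b_pow_three a_mul_b_pow_three
  have hx : SemiconjBy a x y := (mul_inv_cancel_left a b).trans (inv_mul_cancel_right b a).symm
  have hy : SemiconjBy a y (x⁻¹ * y⁻¹) := semiconjBy_mul_inv a_pow_three a_mul_b_pow_three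
  exact mul_inv_mul_zpow_mul_pow_three_zpow_conj hc hx hy r s

end Triangle333
end
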